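/- For every s ≥ 0, ||Q_{2^s}|| = (√(1 − 2γ_{s+1})/2)·exp(2^s Σ_{k=1}^s 2^{−k} log γ_k), and consequently the Widom factor satisfies W_{2^s} = √(1 − 2γ_{s+1}) / (2·exp(Σ_{k=s+1}^∞ 2^{s−k} log γ_k)) ≥ √2. -/

import Mathlib

open Polynomial MeasureTheory Filter

/-- `r γ s` : the recursively defined scales `r 0 = 1`, `r (s+1) = γ (s+1) * (r s)²`. -/
noncomputable def r (γ : ℕ → ℝ) : ℕ → ℝ
  | 0 => 1
  | s + 1 => γ (s + 1) * (r γ s) ^ 2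

/-- `P γ s` : the polynomial `P_{2^s}`, with `P_1 = X - 1` and
`P_{2^{s+1}} = P_{2^s} · (P_{2^s} + r_s)`. -/
noncomputable def P (γ : ℕ → ℝ) : ℕ → Polynomial ℝ
  | 0 => X - 1
  | s + 1 => P γ s * (P γ s + C (r γ s))

/-- The integral `∫ f dν_s` of a function `f` against the normalized counting measure `ν_s`
on the `2^s` (simple, real) zeros of `P_{2^s} + r_s/2`. -/
noncomputable def nuInt (γ : ℕ → ℝ) (s : ℕ) (f : ℝ → ℝ) : ℝ :=
  (((P γ s + C (r γ s / 2)).roots.map f).sum) / 2 ^ s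

/-- The Widom factors `W_n = ‖Q_n‖ / C^n`, where `‖f‖ = (∫ f² dμ)^{1/2}` and
`C = exp(Σ_{k=1}^∞ 2^{-k} log γ_k)` is the logarithmic capacity of `K(γ)`. -/
noncomputable def widomW (γ : ℕ → ℝ) (μ : MeasureTheory.Measure ℝ)
    (Q : ℕ → Polynomial ℝ) (n : ℕ) : ℝ :=
  Real.sqrt (∫ x, ((Q n).eval x) ^ 2 ∂μ) /
    (Real.exp (∑' k : ℕ, (1 / 2 : ℝ) ^ (k + 1) * Real.log (γ (k + 1)))) ^ n

/-!
Write `T_t = P_{2^t} + r_t/2` (`Pmid`). Then `T_{t+1} = T_t² - a_t` with `a_t = r_t²/4 - r_{t+1}/2`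
(`normSq`), so for `|u| ≤ r_{t+1}/2` the zeros of `T_{t+1} - u` are those of `T_t - c` and
`T_t + c`, where `c = √(a_t + u) ≤ r_t/2`. Writing a polynomial of degree `< 2^{t+1}` as
`A + T_t B` with `deg A, deg B < 2^t`, induction on `t` shows that the sum of a polynomial of
degree `< 2^t` over the zeros of `T_t - u` does not depend on `u`, and that passing from level `t'`
to level `t ≥ t'` multiplies it by `2^{t-t'}`. Hence `ν_t` is constant in `t` on polynomials of
degree `< 2^t`, so it integrates them exactly as `μ` does. On the zeros of `T_{s+1}`,
`T_s = ±√a_s` on two halves of equal weight, which gives `T_s ⊥ 𝒫_{2^s - 1}`; then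
`‖T_s‖² = ∫ (T_{s+1} + a_s) dμ = a_s`, so `Q_{2^s} = T_s` and `‖Q_{2^s}‖ = √(1 - 2γ_{s+1}) r_s / 2`.
Finally `C^{2^s} = r_s · exp (∑_{j ≥ 0} 2^{-j-1} log γ_{s+1+j})`, and this last sum is at most
`log (1/4)` because every `γ_k < 1/4`.
-/

theorem Polynomial.Monic.add_C_of_natDegree_pos {R : Type*} [Semiring R] {p : R[X]}
    (hp : p.Monic) (hd : 0 < p.natDegree) (a : R) : (p + C a).Monic :=
  hp.add_of_left (degree_C_le.trans_lt (natDegree_pos_iff_degree_pos.1 hd))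

lemma monic_P_and_natDegree (γ : ℕ → ℝ) (t : ℕ) :
    (P γ t).Monic ∧ (P γ t).natDegree = 2 ^ t := by
  induction t with
  | zero => rw [P, ← C_1]; exact ⟨monic_X_sub_C 1, natDegree_X_sub_C 1⟩
  | succ t ih =>
    obtain ⟨hm, hd⟩ := ih
    have hm' := hm.add_C_of_natDegree_pos (by rw [hd]; positivity) (r γ t)
    refine ⟨hm.mul hm', ?_⟩
    rw [P, hm.natDegree_mul hm', natDegree_add_C, hd, pow_succ, mul_two]

noncomputable def Pmid (γ : ℕ → ℝ) (t : ℕ) : ℝ[X] := P γ t + C (r γ t / 2)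

noncomputable def normSq (γ : ℕ → ℝ) (t : ℕ) : ℝ := r γ t ^ 2 / 4 - r γ (t + 1) / 2

lemma natDegree_Pmid (γ : ℕ → ℝ) (t : ℕ) : (Pmid γ t).natDegree = 2 ^ t := by
  rw [Pmid, natDegree_add_C, (monic_P_and_natDegree γ t).2]

lemma monic_Pmid_sub_C (γ : ℕ → ℝ) (t : ℕ) (u : ℝ) : (Pmid γ t - C u).Monic := by
  rw [Pmid, add_sub_assoc, ← C_sub]
  exact (monic_P_and_natDegree γ t).1.add_C_of_natDegree_pos
    (by rw [(monic_P_and_natDegree γ t).2]; positivity) _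

lemma monic_Pmid (γ : ℕ → ℝ) (t : ℕ) : (Pmid γ t).Monic := by
  simpa using monic_Pmid_sub_C γ t 0

lemma Pmid_zero_sub_C (γ : ℕ → ℝ) (u : ℝ) : Pmid γ 0 - C u = X - C (1 / 2 + u) := by
  refine Polynomial.funext fun x => ?_
  simp only [Pmid, P, r, eval_sub, eval_add, eval_X, eval_C, eval_one]
  ring

lemma Pmid_succ (γ : ℕ → ℝ) (t : ℕ) : Pmid γ (t + 1) = Pmid γ t ^ 2 - C (normSq γ t) := by
  refine Polynomial.funext fun x => ?_
  simp only [Pmid, P, normSq, eval_sub, eval_add, eval_mul, eval_pow, eval_C]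
  ring

noncomputable def levelSum (γ : ℕ → ℝ) (t : ℕ) (u : ℝ) (q : ℝ[X]) : ℝ :=
  ((Pmid γ t - C u).roots.map fun x => q.eval x).sum

lemma nuInt_eval_eq_levelSum (γ : ℕ → ℝ) (t : ℕ) (q : ℝ[X]) :
    nuInt γ t (fun x => q.eval x) = levelSum γ t 0 q / 2 ^ t := by
  rw [levelSum, map_zero, sub_zero]
  rfl

lemma levelSum_zero (γ : ℕ → ℝ) (u : ℝ) (q : ℝ[X]) :
    levelSum γ 0 u q = q.eval (1 / 2 + u) := by
  rw [levelSum, Pmid_zero_sub_C, roots_X_sub_C, Multiset.map_singleton, Multiset.sum_singleton]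

lemma levelSum_add (γ : ℕ → ℝ) (t : ℕ) (u : ℝ) (p q : ℝ[X]) :
    levelSum γ t u (p + q) = levelSum γ t u p + levelSum γ t u q := by
  simp only [levelSum, eval_add, Multiset.sum_map_add]

lemma levelSum_sub (γ : ℕ → ℝ) (t : ℕ) (u : ℝ) (p q : ℝ[X]) :
    levelSum γ t u (p - q) = levelSum γ t u p - levelSum γ t u q := by
  simp only [levelSum, eval_sub, Multiset.sum_map_sub]

lemma levelSum_Pmid_mul (γ : ℕ → ℝ) (t : ℕ) (u : ℝ) (q : ℝ[X]) :
    levelSum γ t u (Pmid γ t * q) = u * levelSum γ t u q := by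
  rw [levelSum, levelSum, ← Multiset.sum_map_mul_left]
  refine congrArg _ (Multiset.map_congr rfl fun x hx => ?_)
  rw [eval_mul, (mem_roots_sub_C'.1 hx).2]

theorem Polynomial.exists_eq_add_mul_of_natDegree_lt {R : Type*} [Ring R] {F q : R[X]}
    (hF : F.Monic) (hq : q.natDegree < 2 * F.natDegree) :
    ∃ A B : R[X], A.natDegree < F.natDegree ∧ B.natDegree < F.natDegree ∧ q = A + F * B := by
  have hF1 : F ≠ 1 := by
    rintro rfl
    simp at hq
  refine ⟨q %ₘ F, q /ₘ F, natDegree_modByMonic_lt q hF hF1, ?_, (modByMonic_add_div q F).symm⟩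
  rw [natDegree_divByMonic q hF]
  omega

section Level

variable {γ : ℕ → ℝ} (hγ : ∀ s : ℕ, 0 < γ (s + 1) ∧ γ (s + 1) < 1 / 4)
include hγ

lemma r_pos (t : ℕ) : 0 < r γ t := by
  induction t with
  | zero => exact one_pos
  | succ t ih => exact mul_pos (hγ t).1 (pow_pos ih 2)

lemma abs_zero_le_half_r (t : ℕ) : |(0 : ℝ)| ≤ r γ t / 2 := by
  rw [abs_zero]
  have := r_pos hγ t
  positivity

lemma exists_levelSum_succ {t : ℕ} {u : ℝ} (hu : |u| ≤ r γ (t + 1) / 2) :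
    ∃ c, |c| ≤ r γ t / 2 ∧
      ∀ q, levelSum γ (t + 1) u q = levelSum γ t c q + levelSum γ t (-c) q := by
  have hr := r_pos hγ t
  have hrs : r γ (t + 1) = γ (t + 1) * r γ t ^ 2 := rfl
  obtain ⟨hu₁, hu₂⟩ := abs_le.1 hu
  have h₀ : 0 ≤ normSq γ t + u := by rw [normSq]; nlinarith [(hγ t).2]
  have h₁ : normSq γ t + u ≤ (r γ t / 2) ^ 2 := by rw [normSq]; nlinarith
  set c := √(normSq γ t + u)
  have hfac : Pmid γ (t + 1) - C u = (Pmid γ t - C c) * (Pmid γ t - C (-c)) := by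
    have hc : C c * C c = C (normSq γ t) + C u := by
      rw [← C_mul, ← C_add, Real.mul_self_sqrt h₀]
    rw [Pmid_succ, C_neg]
    linear_combination hc
  refine ⟨c, ?_, fun q => ?_⟩
  · rw [abs_of_nonneg (Real.sqrt_nonneg _)]
    exact (Real.sqrt_le_left (by positivity)).2 h₁
  · rw [levelSum, hfac, roots_mul ((monic_Pmid_sub_C γ t c).mul
      (monic_Pmid_sub_C γ t (-c))).ne_zero, Multiset.map_add, Multiset.sum_add]
    rfl

lemma levelSum_eq_of_natDegree_lt {t : ℕ} {q : ℝ[X]} (hq : q.natDegree < 2 ^ t)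
    {u v : ℝ} (hu : |u| ≤ r γ t / 2) (hv : |v| ≤ r γ t / 2) :
    levelSum γ t u q = levelSum γ t v q := by
  induction t generalizing q u v with
  | zero =>
    rw [eq_C_of_natDegree_eq_zero (Nat.lt_one_iff.1 hq)]
    simp [levelSum_zero]
  | succ t ih =>
    rw [pow_succ, mul_comm, ← natDegree_Pmid γ t] at hq
    obtain ⟨A, B, hA, hB, rfl⟩ := exists_eq_add_mul_of_natDegree_lt (monic_Pmid γ t) hq
    rw [natDegree_Pmid] at hA hB
    have key : ∀ w, |w| ≤ r γ (t + 1) / 2 →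
        levelSum γ (t + 1) w (A + Pmid γ t * B) = 2 * levelSum γ t 0 A := by
      intro w hw
      obtain ⟨c, hc, hsplit⟩ := exists_levelSum_succ hγ hw
      have hc' : |-c| ≤ r γ t / 2 := by rwa [abs_neg]
      have h0 := abs_zero_le_half_r hγ t
      rw [hsplit, levelSum_add, levelSum_add, levelSum_Pmid_mul, levelSum_Pmid_mul,
        ih hA hc h0, ih hA hc' h0, ih hB hc' hc]
      ring
    rw [key u hu, key v hv]

lemma levelSum_eq_two_pow_mul {m t : ℕ} (hmt : m ≤ t) {q : ℝ[X]} (hq : q.natDegree < 2 ^ m)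
    {u v : ℝ} (hu : |u| ≤ r γ t / 2) (hv : |v| ≤ r γ m / 2) :
    levelSum γ t u q = 2 ^ (t - m) * levelSum γ m v q := by
  induction t, hmt using Nat.le_induction generalizing u with
  | base => rw [Nat.sub_self, pow_zero, one_mul, levelSum_eq_of_natDegree_lt hγ hq hu hv]
  | succ t hmt ih =>
    obtain ⟨c, hc, hsplit⟩ := exists_levelSum_succ hγ hu
    rw [hsplit, ih hc, ih (u := -c) (by rwa [abs_neg]), Nat.sub_add_comm hmt, pow_succ]
    ring

lemma levelSum_C {t : ℕ} {u : ℝ} (hu : |u| ≤ r γ t / 2) (a : ℝ) :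
    levelSum γ t u (C a) = 2 ^ t * a := by
  rw [levelSum_eq_two_pow_mul hγ (Nat.zero_le t) (by simp) hu (abs_zero_le_half_r hγ 0),
    levelSum_zero, eval_C, Nat.sub_zero]

lemma levelSum_succ_Pmid_mul {t : ℕ} {q : ℝ[X]} (hq : q.natDegree < 2 ^ t)
    {u : ℝ} (hu : |u| ≤ r γ (t + 1) / 2) :
    levelSum γ (t + 1) u (Pmid γ t * q) = 0 := by
  obtain ⟨c, hc, hsplit⟩ := exists_levelSum_succ hγ hu
  rw [hsplit, levelSum_Pmid_mul, levelSum_Pmid_mul,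
    levelSum_eq_of_natDegree_lt hγ hq (u := -c) (v := c) (by rwa [abs_neg]) hc]
  ring

end Level

section Moments

variable {γ : ℕ → ℝ} {μ : Measure ℝ}
  (hμconv : ∀ p : Polynomial ℝ,
    Tendsto (fun s => nuInt γ s (fun x => p.eval x)) atTop (nhds (∫ x, p.eval x ∂μ)))
include hμconv

lemma integral_eval_sub (p q : ℝ[X]) :
    ∫ x, (p - q).eval x ∂μ = ∫ x, p.eval x ∂μ - ∫ x, q.eval x ∂μ := by
  refine tendsto_nhds_unique (hμconv (p - q)) ?_
  simpa only [nuInt_eval_eq_levelSum, levelSum_sub, sub_div] using (hμconv p).sub (hμconv q)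

variable (hγ : ∀ s : ℕ, 0 < γ (s + 1) ∧ γ (s + 1) < 1 / 4)
include hγ

lemma integral_eval_eq_levelSum {m : ℕ} {q : ℝ[X]} (hq : q.natDegree < 2 ^ m) :
    ∫ x, q.eval x ∂μ = levelSum γ m 0 q / 2 ^ m := by
  refine tendsto_nhds_unique (hμconv q) (tendsto_const_nhds.congr' ?_)
  filter_upwards [eventually_ge_atTop m] with t ht
  rw [nuInt_eval_eq_levelSum, levelSum_eq_two_pow_mul hγ ht hq (abs_zero_le_half_r hγ t)
    (abs_zero_le_half_r hγ m), ← Nat.sub_add_cancel ht, pow_add, Nat.add_sub_cancel]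
  field_simp

lemma integral_eval_Pmid_mul {s : ℕ} {q : ℝ[X]} (hq : q.natDegree < 2 ^ s) :
    ∫ x, (Pmid γ s * q).eval x ∂μ = 0 := by
  have hdeg : (Pmid γ s * q).natDegree < 2 ^ (s + 1) := by
    calc (Pmid γ s * q).natDegree ≤ 2 ^ s + q.natDegree := by
          simpa only [natDegree_Pmid] using natDegree_mul_le (p := Pmid γ s) (q := q)
      _ < 2 ^ (s + 1) := by rw [pow_succ]; omega
  rw [integral_eval_eq_levelSum hμconv hγ hdeg,
    levelSum_succ_Pmid_mul hγ hq (abs_zero_le_half_r hγ _), zero_div]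

lemma integral_eval_Pmid_sq (s : ℕ) : ∫ x, (Pmid γ s).eval x ^ 2 ∂μ = normSq γ s := by
  have hsq : Pmid γ s ^ 2 = Pmid γ (s + 1) * 1 + C (normSq γ s) := by
    rw [Pmid_succ]
    ring
  have hdeg : (Pmid γ s ^ 2).natDegree < 2 ^ (s + 2) := by
    rw [(monic_Pmid γ s).natDegree_pow, natDegree_Pmid, ← pow_succ']
    exact Nat.pow_lt_pow_right one_lt_two (Nat.lt_succ_self _)
  simp only [← eval_pow]
  rw [integral_eval_eq_levelSum hμconv hγ hdeg, hsq, levelSum_add,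
    levelSum_succ_Pmid_mul hγ (by simp) (abs_zero_le_half_r hγ _),
    levelSum_C hγ (abs_zero_le_half_r hγ _)]
  field_simp
  ring

lemma eq_Pmid_of_orthogonal (hμpos : ∀ p : Polynomial ℝ, p ≠ 0 → 0 < ∫ x, (p.eval x) ^ 2 ∂μ)
    {s : ℕ} {Q : ℝ[X]} (hQm : Q.Monic) (hQd : Q.natDegree = 2 ^ s)
    (hQ : ∀ p : ℝ[X], p.degree < ((2 ^ s : ℕ) : WithBot ℕ) → ∫ x, Q.eval x * p.eval x ∂μ = 0) :
    Q = Pmid γ s := by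
  by_contra hne
  set D := Q - Pmid γ s
  have hD0 : D ≠ 0 := sub_ne_zero.2 hne
  have hD : D.degree < ((2 ^ s : ℕ) : WithBot ℕ) := by
    have hdeg : Q.degree = ((2 ^ s : ℕ) : WithBot ℕ) := by
      rw [degree_eq_natDegree hQm.ne_zero, hQd]
    rw [← hdeg]
    refine degree_sub_lt_left ?_ hQm.ne_zero
      (by rw [hQm.leadingCoeff, (monic_Pmid γ s).leadingCoeff])
    rw [hdeg, degree_eq_natDegree (monic_Pmid γ s).ne_zero, natDegree_Pmid]
  have hvanish : ∫ x, (D.eval x) ^ 2 ∂μ = 0 := by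
    calc ∫ x, (D.eval x) ^ 2 ∂μ = ∫ x, (Q * D - Pmid γ s * D).eval x ∂μ := by
          simp only [eval_sub, eval_mul, D]
          ring_nf
      _ = 0 := by
          rw [integral_eval_sub hμconv, integral_eval_Pmid_mul hμconv hγ
            ((natDegree_lt_iff_degree_lt hD0).2 hD)]
          simpa only [eval_mul, sub_zero] using hQ D hD
  exact (hμpos D hD0).ne' hvanish

end Moments

lemma sum_range_half_pow_succ (f : ℕ → ℝ) (s : ℕ) :
    ∑ k ∈ Finset.range s, (1 / 2 : ℝ) ^ (k + 1) * f (k + 1) =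
      ∑ k ∈ Finset.Icc 1 s, (1 / 2 : ℝ) ^ k * f k := by
  rw [Finset.range_eq_Ico, Finset.sum_Ico_add' (fun k => (1 / 2 : ℝ) ^ k * f k), zero_add,
    Finset.Ico_add_one_right_eq_Icc]

lemma two_pow_mul_half_pow_add (s j : ℕ) :
    (2 : ℝ) ^ s * (1 / 2) ^ (j + s + 1) = (1 / 2) ^ (j + 1) := by
  rw [show j + s + 1 = j + 1 + s by ring, pow_add, mul_left_comm, ← mul_pow]
  norm_num

lemma summable_half_pow_mul_shift {f : ℕ → ℝ}
    (hf : Summable fun k => (1 / 2 : ℝ) ^ (k + 1) * f (k + 1)) (s : ℕ) :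
    Summable fun j => (1 / 2 : ℝ) ^ (j + 1) * f (s + 1 + j) := by
  refine (((summable_nat_add_iff s).2 hf).mul_left (2 ^ s)).congr fun j => ?_
  rw [← mul_assoc, two_pow_mul_half_pow_add, show j + s + 1 = s + 1 + j by ring]

lemma two_pow_mul_tsum_half_pow {f : ℕ → ℝ}
    (hf : Summable fun k => (1 / 2 : ℝ) ^ (k + 1) * f (k + 1)) (s : ℕ) :
    2 ^ s * ∑' k, (1 / 2 : ℝ) ^ (k + 1) * f (k + 1) =
      2 ^ s * ∑ k ∈ Finset.Icc 1 s, (1 / 2 : ℝ) ^ k * f k +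
        ∑' j, (1 / 2 : ℝ) ^ (j + 1) * f (s + 1 + j) := by
  rw [← hf.sum_add_tsum_nat_add s, mul_add, sum_range_half_pow_succ, ← tsum_mul_left]
  congr 2 with j
  rw [← mul_assoc, two_pow_mul_half_pow_add, show j + s + 1 = s + 1 + j by ring]

lemma tsum_half_pow_mul_le {f : ℕ → ℝ} {B : ℝ}
    (hf : Summable fun j => (1 / 2 : ℝ) ^ (j + 1) * f j) (hB : ∀ j, f j ≤ B) :
    ∑' j, (1 / 2 : ℝ) ^ (j + 1) * f j ≤ B := by
  have hgeom : HasSum (fun j : ℕ => (1 / 2 : ℝ) ^ (j + 1) * B) B := by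
    have := (hasSum_geometric_two' 1).mul_right B
    simpa [pow_succ, div_eq_mul_inv, mul_comm, mul_left_comm, mul_assoc] using this
  exact (hf.tsum_le_tsum (fun j => mul_le_mul_of_nonneg_left (hB j) (by positivity))
    hgeom.summable).trans_eq hgeom.tsum_eq

lemma summable_half_pow_mul_log {γ : ℕ → ℝ}
    (hcap : Summable fun k : ℕ => (1 / 2 : ℝ) ^ (k + 1) * Real.log (1 / γ (k + 1))) :
    Summable fun k : ℕ => (1 / 2 : ℝ) ^ (k + 1) * Real.log (γ (k + 1)) := by
  simpa only [one_div (γ _), Real.log_inv, mul_neg, neg_neg] using hcap.neg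

section Capacity

variable {γ : ℕ → ℝ} (hγ : ∀ s : ℕ, 0 < γ (s + 1) ∧ γ (s + 1) < 1 / 4)
include hγ

lemma r_eq_exp (s : ℕ) :
    r γ s = Real.exp (2 ^ s * ∑ k ∈ Finset.Icc 1 s, (1 / 2 : ℝ) ^ k * Real.log (γ k)) := by
  induction s with
  | zero => simp [r]
  | succ s ih =>
    rw [r, ih, ← Real.exp_log (hγ s).1, sq, ← Real.exp_add, ← Real.exp_add,
      Finset.sum_Icc_succ_top (by omega), mul_add, ← mul_assoc, ← mul_pow]
    norm_num
    ring

lemma sqrt_normSq (s : ℕ) : √(normSq γ s) = √(1 - 2 * γ (s + 1)) / 2 * r γ s := by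
  have h₁ : 0 ≤ 1 - 2 * γ (s + 1) := by linarith [(hγ s).2]
  rw [← Real.sqrt_sq (by have := r_pos hγ s; positivity : 0 ≤ √(1 - 2 * γ (s + 1)) / 2 * r γ s),
    mul_pow, div_pow, Real.sq_sqrt h₁, normSq, r]
  ring_nf

lemma exp_tsum_pow_two_pow
    (hcap : Summable fun k : ℕ => (1 / 2 : ℝ) ^ (k + 1) * Real.log (1 / γ (k + 1))) (s : ℕ) :
    Real.exp (∑' k : ℕ, (1 / 2 : ℝ) ^ (k + 1) * Real.log (γ (k + 1))) ^ 2 ^ s =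
      r γ s * Real.exp (∑' j : ℕ, (1 / 2 : ℝ) ^ (j + 1) * Real.log (γ (s + 1 + j))) := by
  rw [← Real.exp_nat_mul, Nat.cast_pow, Nat.cast_ofNat,
    two_pow_mul_tsum_half_pow (f := fun k => Real.log (γ k)) (summable_half_pow_mul_log hcap),
    Real.exp_add, ← r_eq_exp hγ]

lemma exp_tsum_tail_le
    (hcap : Summable fun k : ℕ => (1 / 2 : ℝ) ^ (k + 1) * Real.log (1 / γ (k + 1))) (s : ℕ) :
    Real.exp (∑' j : ℕ, (1 / 2 : ℝ) ^ (j + 1) * Real.log (γ (s + 1 + j))) ≤ 1 / 4 := by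
  have hle : ∀ j, Real.log (γ (s + 1 + j)) ≤ Real.log (1 / 4) := fun j => by
    obtain ⟨h₀, h₁⟩ := hγ (s + j)
    rw [add_right_comm] at h₀ h₁
    exact (Real.log_lt_log h₀ h₁).le
  rw [← Real.exp_log (by norm_num : (0 : ℝ) < 1 / 4)]
  exact Real.exp_le_exp.2
    (tsum_half_pow_mul_le (summable_half_pow_mul_shift (f := fun k => Real.log (γ k))
      (summable_half_pow_mul_log hcap) s) hle)

end Capacity

lemma sqrt_two_le_sqrt_div {g E : ℝ} (hg : g ≤ 1 / 4) (hE₀ : 0 < E) (hE : E ≤ 1 / 4) :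
    √2 ≤ √(1 - 2 * g) / (2 * E) := by
  rw [le_div_iff₀ (by positivity)]
  calc √2 * (2 * E) ≤ √2 / 2 := by nlinarith [Real.sqrt_nonneg 2]
    _ ≤ √(1 - 2 * g) := by
      rw [Real.le_sqrt (by positivity) (by linarith), div_pow, Real.sq_sqrt zero_le_two]
      linarith

theorem stmt_18_general (γ : ℕ → ℝ) (hγ : ∀ s : ℕ, 0 < γ (s + 1) ∧ γ (s + 1) < 1 / 4)
    (hcap : Summable fun k : ℕ => (1 / 2 : ℝ) ^ (k + 1) * Real.log (1 / γ (k + 1)))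
    (μ : Measure ℝ)
    (hμpos : ∀ p : Polynomial ℝ, p ≠ 0 → 0 < ∫ x, (p.eval x) ^ 2 ∂μ)
    (hμconv : ∀ p : Polynomial ℝ,
      Tendsto (fun s => nuInt γ s (fun x => p.eval x)) atTop (nhds (∫ x, p.eval x ∂μ)))
    (Q : ℕ → Polynomial ℝ) (hQmonic : ∀ n, (Q n).Monic) (hQdeg : ∀ n, (Q n).natDegree = n)
    (hQorth : ∀ n : ℕ, ∀ p : Polynomial ℝ, p.degree < (n : WithBot ℕ) →
      ∫ x, (Q n).eval x * p.eval x ∂μ = 0)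
    (s : ℕ) :
    Real.sqrt (∫ x, ((Q (2 ^ s)).eval x) ^ 2 ∂μ) =
      Real.sqrt (1 - 2 * γ (s + 1)) / 2 *
        Real.exp ((2 ^ s : ℝ) * ∑ k ∈ Finset.Icc 1 s, (1 / 2 : ℝ) ^ k * Real.log (γ k)) ∧
    widomW γ μ Q (2 ^ s) =
      Real.sqrt (1 - 2 * γ (s + 1)) /
        (2 * Real.exp (∑' j : ℕ, (1 / 2 : ℝ) ^ (j + 1) * Real.log (γ (s + 1 + j)))) ∧
    Real.sqrt 2 ≤ widomW γ μ Q (2 ^ s) := by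
  have hQ : Q (2 ^ s) = Pmid γ s :=
    eq_Pmid_of_orthogonal hμconv hγ hμpos (hQmonic _) (hQdeg _) (hQorth _)
  have hnorm : √(∫ x, ((Q (2 ^ s)).eval x) ^ 2 ∂μ) = √(1 - 2 * γ (s + 1)) / 2 * r γ s := by
    rw [hQ, integral_eval_Pmid_sq hμconv hγ, sqrt_normSq hγ]
  have hW : widomW γ μ Q (2 ^ s) = √(1 - 2 * γ (s + 1)) /
      (2 * Real.exp (∑' j : ℕ, (1 / 2 : ℝ) ^ (j + 1) * Real.log (γ (s + 1 + j)))) := by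
    rw [widomW, hnorm, exp_tsum_pow_two_pow hγ hcap]
    field_simp [(r_pos hγ s).ne']
  refine ⟨by rw [hnorm, r_eq_exp hγ], hW, ?_⟩
  rw [hW]
  exact sqrt_two_le_sqrt_div (hγ s).2.le (Real.exp_pos _) (exp_tsum_tail_le hγ hcap s)

theorem stmt_18 (γ : ℕ → ℝ) (hγ : ∀ s : ℕ, 0 < γ (s + 1) ∧ γ (s + 1) < 1 / 4)
    (hcap : Summable fun k : ℕ => (1 / 2 : ℝ) ^ (k + 1) * Real.log (1 / γ (k + 1)))
    (μ : Measure ℝ) [IsProbabilityMeasure μ]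
    (hμint : ∀ p : Polynomial ℝ, Integrable (fun x => p.eval x) μ)
    (hμpos : ∀ p : Polynomial ℝ, p ≠ 0 → 0 < ∫ x, (p.eval x) ^ 2 ∂μ)
    (hμconv : ∀ p : Polynomial ℝ,
      Tendsto (fun s => nuInt γ s (fun x => p.eval x)) atTop (nhds (∫ x, p.eval x ∂μ)))
    (Q : ℕ → Polynomial ℝ) (hQmonic : ∀ n, (Q n).Monic) (hQdeg : ∀ n, (Q n).natDegree = n)
    (hQorth : ∀ n : ℕ, ∀ p : Polynomial ℝ, p.degree < (n : WithBot ℕ) →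
      ∫ x, (Q n).eval x * p.eval x ∂μ = 0)
    (s : ℕ) :
    Real.sqrt (∫ x, ((Q (2 ^ s)).eval x) ^ 2 ∂μ) =
      Real.sqrt (1 - 2 * γ (s + 1)) / 2 *
        Real.exp ((2 ^ s : ℝ) * ∑ k ∈ Finset.Icc 1 s, (1 / 2 : ℝ) ^ k * Real.log (γ k)) ∧
    widomW γ μ Q (2 ^ s) =
      Real.sqrt (1 - 2 * γ (s + 1)) /
        (2 * Real.exp (∑' j : ℕ, (1 / 2 : ℝ) ^ (j + 1) * Real.log (γ (s + 1 + j)))) ∧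
    Real.sqrt 2 ≤ widomW γ μ Q (2 ^ s) :=
  stmt_18_general γ hγ hcap μ hμpos hμconv Q hQmonic hQdeg hQorth s
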